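/- Let f : I ⊆ (0,∞) → (0,∞) be differentiable on I°, let a, b ∈ I° with a < b, f' integrable on [a,b], and suppose |f'|^q is s-geometrically convex on [a,b] for some q > 1 and s ∈ (0,1]. If |f'(a)| ≥ 1 and |f'(b)| ≥ 1, then |(f(a)+f(b))/2 − (1/(ln b − ln a)) ∫_a^b f(x)/x dx| ≤ (1/2) ln(b/a) · ((q−1)/(2q−1))^{1−1/q} · [ a|f'(a)||f'(b)|^{1−s} g₂(θ₁)^{1/q} + b|f'(b)||f'(a)|^{1−s} g₂(θ₂)^{1/q} ]. -/

import Mathlib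

open Real MeasureTheory Set

/-- `g` is `s`-geometrically convex on `J`. -/
def SGeometricallyConvexOn (s : ℝ) (J : Set ℝ) (g : ℝ → ℝ) : Prop :=
  ∀ x ∈ J, ∀ y ∈ J, ∀ t ∈ Set.Icc (0:ℝ) 1,
    g (x ^ t * y ^ (1 - t)) ≤ g x ^ t ^ s * g y ^ (1 - t) ^ s

noncomputable def g₁ (u : ℝ) : ℝ :=
  if u = 1 then 1/2 else (u * Real.log u - u + 1) / (Real.log u) ^ 2

noncomputable def g₂ (u : ℝ) : ℝ :=
  if u = 1 then 1 else (u - 1) / Real.log u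

/-!
Substituting `x = a ^ t * b ^ (1 - t)` turns `∫ x in a..b, f x / x` into `(log b - log a)` times
an integral over `[0, 1]`, and an integration by parts against `1/2 - t` writes the left-hand side
as `(log b - log a) * ∫ t in 0..1, (1/2 - t) * x(t) * f' (x(t))`. Hölder's inequality with
exponents `q / (q - 1)` and `q` separates the weight `|1/2 - t|`. Since `|f' a|, |f' b| ≥ 1`,
Bernoulli's inequality `t ^ s ≤ s * t + (1 - s)` linearises the exponents in the `s`-geometric
convexity bound, so `x(t) * |f' (x(t))|` is dominated by `(|f' a| * |f' b|) ^ (1 - s)` times the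
geometric path from `b * |f' b| ^ s` to `a * |f' a| ^ s`, whose `q`-th power integrates to an
expression in `g₂`. This already bounds the left-hand side by the second summand; the first one
is nonnegative.
-/

lemma g₂_nonneg {u : ℝ} (hu : 0 < u) : 0 ≤ g₂ u := by
  unfold g₂
  split_ifs with h
  · exact zero_le_one
  · rcases lt_or_gt_of_ne h with hlt | hgt
    · exact div_nonneg_of_nonpos (by linarith) (log_neg hu hlt).le
    · exact div_nonneg (by linarith) (log_pos hgt).le

theorem integral_rpow_eq_g₂ {c : ℝ} (hc : 0 < c) : ∫ t in (0:ℝ)..1, c ^ t = g₂ c := by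
  rcases eq_or_ne c 1 with rfl | h
  · simp [g₂]
  · have hlog : log c ≠ 0 := log_ne_zero_of_pos_of_ne_one hc h
    simp_rw [rpow_def_of_pos hc]
    rw [intervalIntegral.integral_comp_mul_left (fun x => exp x) hlog]
    simp [g₂, h, exp_log hc, div_eq_inv_mul]

lemma rpow_le_mul_add_one_sub {t s : ℝ} (ht : 0 ≤ t) (hs0 : 0 ≤ s) (hs1 : s ≤ 1) :
    t ^ s ≤ s * t + (1 - s) := by
  have := rpow_one_add_le_one_add_mul_self (s := t - 1) (by linarith) hs0 hs1
  rw [add_sub_cancel] at this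
  linarith

lemma integral_abs_half_sub_rpow {p : ℝ} (hp : 0 < p) :
    ∫ t in (0:ℝ)..1, |1/2 - t| ^ p = (1/2) ^ p / (p + 1) := by
  have hcont : Continuous fun t : ℝ => |1/2 - t| ^ p :=
    (continuous_const.sub continuous_id).abs.rpow_const fun _ => Or.inr hp.le
  have half : ∫ x in (0:ℝ)..(1/2), x ^ p = (1/2) ^ (p + 1) / (p + 1) := by
    rw [integral_rpow (Or.inl (by linarith)), zero_rpow (by linarith)]
    ring
  have left : ∫ t in (0:ℝ)..(1/2), |1/2 - t| ^ p = (1/2) ^ (p + 1) / (p + 1) := by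
    rw [intervalIntegral.integral_congr (g := fun t => (1/2 - t) ^ p) fun t ht => by
      rw [uIcc_of_le (by norm_num)] at ht
      rw [abs_of_nonneg (by linarith [ht.2])]]
    simpa [intervalIntegral.integral_comp_sub_left (fun x => x ^ p)] using half
  have right : ∫ t in (1/2:ℝ)..1, |1/2 - t| ^ p = (1/2) ^ (p + 1) / (p + 1) := by
    rw [intervalIntegral.integral_congr (g := fun t => (t - 1/2) ^ p) fun t ht => by
      rw [uIcc_of_le (by norm_num)] at ht
      rw [abs_sub_comm, abs_of_nonneg (by linarith [ht.1])]]
    rw [intervalIntegral.integral_comp_sub_right (fun x => x ^ p)]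
    norm_num [half]
  rw [← intervalIntegral.integral_add_adjacent_intervals (hcont.intervalIntegrable 0 (1/2))
    (hcont.intervalIntegrable (1/2) 1), left, right, rpow_add (by norm_num), rpow_one]
  ring

noncomputable def geomPath (x y t : ℝ) : ℝ := x ^ t * y ^ (1 - t)

section geomPath

variable {x y x' y' t : ℝ}

@[simp] lemma geomPath_zero (x y : ℝ) : geomPath x y 0 = y := by simp [geomPath]

@[simp] lemma geomPath_one (x y : ℝ) : geomPath x y 1 = x := by simp [geomPath]

lemma geomPath_pos (hx : 0 < x) (hy : 0 < y) : 0 < geomPath x y t :=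
  mul_pos (rpow_pos_of_pos hx t) (rpow_pos_of_pos hy _)

lemma continuous_geomPath (hx : 0 < x) (hy : 0 < y) : Continuous (geomPath x y) :=
  (continuous_const.rpow continuous_id fun _ => Or.inl hx.ne').mul
    (continuous_const.rpow (continuous_const.sub continuous_id) fun _ => Or.inl hy.ne')

lemma hasDerivAt_geomPath (hx : 0 < x) (hy : 0 < y) (t : ℝ) :
    HasDerivAt (geomPath x y) (-(log y - log x) * geomPath x y t) t := by
  have h := ((hasDerivAt_id t).const_rpow hx).mul (((hasDerivAt_id t).const_sub 1).const_rpow hy)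
  refine h.congr_deriv ?_
  simp only [geomPath, id]
  ring

lemma geomPath_mem_Icc (hx : 0 < x) (hxy : x ≤ y) (ht : t ∈ Icc (0:ℝ) 1) :
    geomPath x y t ∈ Icc x y := by
  have ht' : 0 ≤ 1 - t := by linarith [ht.2]
  constructor
  · calc x = x ^ t * x ^ (1 - t) := by rw [← rpow_add hx, add_sub_cancel, rpow_one]
      _ ≤ geomPath x y t :=
        mul_le_mul_of_nonneg_left (rpow_le_rpow hx.le hxy ht') (rpow_nonneg hx.le t)
  · calc geomPath x y t ≤ y ^ t * y ^ (1 - t) :=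
          mul_le_mul_of_nonneg_right (rpow_le_rpow hx.le hxy ht.1) (rpow_nonneg (hx.le.trans hxy) _)
      _ = y := by rw [← rpow_add (hx.trans_le hxy), add_sub_cancel, rpow_one]

lemma geomPath_mul (hx : 0 ≤ x) (hy : 0 ≤ y) (hx' : 0 ≤ x') (hy' : 0 ≤ y') :
    geomPath (x * x') (y * y') t = geomPath x y t * geomPath x' y' t := by
  simp only [geomPath, mul_rpow hx hx', mul_rpow hy hy']
  ring

lemma geomPath_rpow (hx : 0 ≤ x) (hy : 0 ≤ y) (q : ℝ) :
    geomPath x y t ^ q = geomPath (x ^ q) (y ^ q) t := by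
  simp only [geomPath, mul_rpow (rpow_nonneg hx _) (rpow_nonneg hy _), ← rpow_mul hx,
    ← rpow_mul hy, mul_comm q]

lemma integral_geomPath (hx : 0 < x) (hy : 0 < y) :
    ∫ t in (0:ℝ)..1, geomPath x y t = y * g₂ (x / y) := by
  have h : ∀ t, geomPath x y t = y * (x / y) ^ t := fun t => by
    rw [geomPath, div_rpow hx.le hy.le, rpow_sub hy, rpow_one]
    field_simp
  simp_rw [h, intervalIntegral.integral_const_mul, integral_rpow_eq_g₂ (div_pos hx hy)]

end geomPath

section geomMeanSubstitution

variable {a b : ℝ}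

lemma integral_div_self_eq_integral_geomPath (ha : 0 < a) (hab : a ≤ b) (f : ℝ → ℝ) :
    ∫ x in a..b, f x / x = (log b - log a) * ∫ t in (0:ℝ)..1, f (geomPath a b t) := by
  have hb : 0 < b := ha.trans_le hab
  have hL : 0 ≤ log b - log a := sub_nonneg.2 (log_le_log ha hab)
  have h := intervalIntegral.integral_deriv_smul_comp_of_deriv_nonpos (a := 0) (b := 1)
    (g := fun x => f x / x)
    (continuous_geomPath ha hb).continuousOn (fun t _ => hasDerivAt_geomPath ha hb t)
    fun t _ => mul_nonpos_of_nonpos_of_nonneg (neg_nonpos.2 hL) (geomPath_pos ha hb).le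
  rw [geomPath_zero, geomPath_one] at h
  rw [← neg_neg (∫ x in a..b, f x / x), ← intervalIntegral.integral_symm, ← h,
    ← intervalIntegral.integral_const_mul, ← intervalIntegral.integral_neg]
  refine intervalIntegral.integral_congr fun t _ => ?_
  have := (geomPath_pos ha hb (t := t)).ne'
  simp only [Function.comp_apply, smul_eq_mul]
  field_simp

lemma intervalIntegrable_geomPath_mul_comp (ha : 0 < a) (hab : a < b) {g : ℝ → ℝ}
    (hg : IntervalIntegrable g volume a b) :
    IntervalIntegrable (fun t => geomPath a b t * g (geomPath a b t)) volume 0 1 := by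
  have hb : 0 < b := ha.trans hab
  have hL : 0 < log b - log a := sub_pos.2 (log_lt_log ha hab)
  have h := (intervalIntegral.integrable_deriv_smul_comp_iff_of_deriv_nonpos (a := 0) (b := 1)
    (g := g) (continuous_geomPath ha hb).continuousOn (fun t _ => hasDerivAt_geomPath ha hb t)
    fun t _ => mul_nonpos_of_nonpos_of_nonneg (neg_nonpos.2 hL.le) (geomPath_pos ha hb).le).2
    (by simpa using hg.symm)
  convert h.const_mul (-(log b - log a))⁻¹ using 2 with t
  simp only [Function.comp_apply, smul_eq_mul]
  field_simp

theorem trapezoid_sub_integral_div_self_eq (ha : 0 < a) (hab : a < b) {f f' : ℝ → ℝ}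
    (hf : ∀ x ∈ Icc a b, HasDerivAt f (f' x) x) (hf' : IntervalIntegrable f' volume a b) :
    (f a + f b) / 2 - 1 / (log b - log a) * ∫ x in a..b, f x / x =
      (log b - log a) *
        ∫ t in (0:ℝ)..1, (1/2 - t) * (geomPath a b t * f' (geomPath a b t)) := by
  have hb : 0 < b := ha.trans hab
  have hL : 0 < log b - log a := sub_pos.2 (log_lt_log ha hab)
  have hu : ∀ t ∈ uIcc (0:ℝ) 1, HasDerivAt (fun t => 1/2 - t) (-1) t := fun t _ => by
    simpa using (hasDerivAt_id t).const_sub (1/2 : ℝ)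
  have hv : ∀ t ∈ uIcc (0:ℝ) 1, HasDerivAt (fun t => f (geomPath a b t))
      (f' (geomPath a b t) * (-(log b - log a) * geomPath a b t)) t := by
    intro t ht
    rw [uIcc_of_le zero_le_one] at ht
    exact (hf _ (geomPath_mem_Icc ha hab.le ht)).comp t (hasDerivAt_geomPath ha hb t)
  have hv' : IntervalIntegrable
      (fun t => f' (geomPath a b t) * (-(log b - log a) * geomPath a b t)) volume 0 1 := by
    convert (intervalIntegrable_geomPath_mul_comp ha hab hf').const_mul (-(log b - log a))
      using 2 with t
    ring
  have ibp := intervalIntegral.integral_mul_deriv_eq_deriv_mul hu hv intervalIntegrable_const hv'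
  have hlhs :
      ∫ t in (0:ℝ)..1, (1/2 - t) * (f' (geomPath a b t) * (-(log b - log a) * geomPath a b t)) =
        -(log b - log a) *
          ∫ t in (0:ℝ)..1, (1/2 - t) * (geomPath a b t * f' (geomPath a b t)) := by
    rw [← intervalIntegral.integral_const_mul]
    exact intervalIntegral.integral_congr fun t _ => by ring
  simp only [geomPath_zero, geomPath_one, neg_one_mul, intervalIntegral.integral_neg, hlhs] at ibp
  rw [integral_div_self_eq_integral_geomPath ha hab.le f, one_div, inv_mul_cancel_left₀ hL.ne']
  linarith

end geomMeanSubstitution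

namespace SGeometricallyConvexOn

variable {s : ℝ} {J : Set ℝ} {g : ℝ → ℝ}

lemma of_rpow {q : ℝ} (hg : SGeometricallyConvexOn s J fun x => g x ^ q) (hq : 0 < q)
    (h0 : ∀ x, 0 ≤ g x) : SGeometricallyConvexOn s J g := by
  intro x hx y hy t ht
  have h : g (x ^ t * y ^ (1 - t)) ^ q ≤ (g x ^ q) ^ t ^ s * (g y ^ q) ^ (1 - t) ^ s :=
    hg x hx y hy t ht
  have swap : ∀ z : ℝ, 0 ≤ z → ∀ e : ℝ, (z ^ q) ^ e = (z ^ e) ^ q := fun z hz e => by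
    rw [← rpow_mul hz, mul_comm, rpow_mul hz]
  have hxy : 0 ≤ g x ^ t ^ s * g y ^ (1 - t) ^ s :=
    mul_nonneg (rpow_nonneg (h0 x) _) (rpow_nonneg (h0 y) _)
  rw [swap _ (h0 x), swap _ (h0 y), ← mul_rpow (rpow_nonneg (h0 x) _) (rpow_nonneg (h0 y) _)] at h
  exact (rpow_le_rpow_iff (h0 _) hxy hq).1 h

lemma apply_geomPath_le (hg : SGeometricallyConvexOn s J g) (hs0 : 0 ≤ s) (hs1 : s ≤ 1)
    {a b : ℝ} (ha : a ∈ J) (hb : b ∈ J) (hga : 1 ≤ g a) (hgb : 1 ≤ g b) {t : ℝ}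
    (ht : t ∈ Icc (0:ℝ) 1) :
    g (geomPath a b t) ≤ (g a * g b) ^ (1 - s) * geomPath (g a ^ s) (g b ^ s) t := by
  have hga0 : 0 < g a := one_pos.trans_le hga
  have hgb0 : 0 < g b := one_pos.trans_le hgb
  calc g (geomPath a b t) ≤ g a ^ t ^ s * g b ^ (1 - t) ^ s := hg a ha b hb t ht
    _ ≤ g a ^ (s * t + (1 - s)) * g b ^ (s * (1 - t) + (1 - s)) :=
      mul_le_mul (rpow_le_rpow_of_exponent_le hga (rpow_le_mul_add_one_sub ht.1 hs0 hs1))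
        (rpow_le_rpow_of_exponent_le hgb (rpow_le_mul_add_one_sub (by linarith [ht.2]) hs0 hs1))
        (rpow_nonneg hgb0.le _) (rpow_nonneg hga0.le _)
    _ = _ := by
      simp only [geomPath, rpow_add hga0, rpow_add hgb0, mul_rpow hga0.le hgb0.le,
        ← rpow_mul hga0.le, ← rpow_mul hgb0.le]
      ring

end SGeometricallyConvexOn

lemma abs_geomPath_mul_deriv_le {f' : ℝ → ℝ} {a b q s : ℝ}
    (hconv : SGeometricallyConvexOn s (Icc a b) fun x => |f' x| ^ q) (hq : 0 < q)
    (hs0 : 0 ≤ s) (hs1 : s ≤ 1) (ha : 0 < a) (hab : a ≤ b)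
    (hfa : 1 ≤ |f' a|) (hfb : 1 ≤ |f' b|)
    {t : ℝ} (ht : t ∈ Icc (0:ℝ) 1) :
    |geomPath a b t * f' (geomPath a b t)| ≤
      (|f' a| * |f' b|) ^ (1 - s) * geomPath (a * |f' a| ^ s) (b * |f' b| ^ s) t := by
  have hb : 0 < b := ha.trans_le hab
  have h := (hconv.of_rpow hq fun x => abs_nonneg (f' x)).apply_geomPath_le hs0 hs1
    (left_mem_Icc.2 hab) (right_mem_Icc.2 hab) hfa hfb ht
  rw [abs_mul, abs_of_pos (geomPath_pos ha hb),
    geomPath_mul ha.le hb.le (by positivity) (by positivity)]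
  calc geomPath a b t * |f' (geomPath a b t)|
      ≤ geomPath a b t * ((|f' a| * |f' b|) ^ (1 - s) * geomPath (|f' a| ^ s) (|f' b| ^ s) t) :=
        mul_le_mul_of_nonneg_left h (geomPath_pos ha hb).le
    _ = _ := by ring

section HolderBounds

variable {g : ℝ → ℝ} {q : ℝ}

theorem abs_integral_half_sub_mul_le (hq : 1 < q)
    (hg : MemLp g (ENNReal.ofReal q) (volume.restrict (Ioc (0:ℝ) 1))) :
    |∫ t in (0:ℝ)..1, (1/2 - t) * g t| ≤
      1/2 * ((q - 1) / (2 * q - 1)) ^ (1 - 1/q) * (∫ t in (0:ℝ)..1, |g t| ^ q) ^ (1/q) := by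
  set p := conjExponent q with hp_def
  have hpq : p.HolderConjugate q := (HolderConjugate.conjExponent hq).symm
  have hp : 0 < p := hpq.pos
  have hu :
      MemLp (fun t : ℝ => 1/2 - t) (ENNReal.ofReal p) (volume.restrict (Ioc (0:ℝ) 1)) := by
    refine MemLp.of_bound (continuous_const.sub continuous_id).aestronglyMeasurable 1 ?_
    filter_upwards [ae_restrict_mem measurableSet_Ioc] with t ht
    rw [norm_eq_abs, abs_le]
    constructor <;> linarith [ht.1, ht.2]
  have holder := integral_mul_norm_le_Lp_mul_Lq hpq hu hg
  simp only [norm_eq_abs, ← intervalIntegral.integral_of_le zero_le_one,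
    integral_abs_half_sub_rpow hp] at holder
  have hconst :
      ((1/2 : ℝ) ^ p / (p + 1)) ^ (1/p) = 1/2 * ((q - 1) / (2 * q - 1)) ^ (1 - 1/q) := by
    have h1 : 1 / (p + 1) = (q - 1) / (2 * q - 1) := by
      rw [hp_def, conjExponent]
      field_simp [(by linarith : q - 1 ≠ 0)]
      ring
    have h2 : 1 / p = 1 - 1 / q := by
      rw [one_div, one_div, hpq.symm.one_sub_inv]
    rw [div_eq_mul_one_div, mul_rpow (by positivity) (by positivity), ← rpow_mul (by norm_num),
      mul_one_div_cancel hp.ne', rpow_one, h1, h2]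
  calc |∫ t in (0:ℝ)..1, (1/2 - t) * g t|
      ≤ ∫ t in (0:ℝ)..1, |1/2 - t| * |g t| := by
        simpa only [abs_mul] using
          intervalIntegral.abs_integral_le_integral_abs (f := fun t => (1/2 - t) * g t) zero_le_one
    _ ≤ _ := holder
    _ = _ := by rw [hconst]

lemma memLp_of_abs_le_geomPath (hq : 0 < q) {x y K : ℝ} (hx : 0 < x) (hy : 0 < y)
    (hmeas : AEStronglyMeasurable g (volume.restrict (Ioc (0:ℝ) 1)))
    (hle : ∀ t ∈ Icc (0:ℝ) 1, |g t| ≤ K * geomPath x y t) :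
    MemLp g (ENNReal.ofReal q) (volume.restrict (Ioc (0:ℝ) 1)) := by
  rw [← integrable_norm_rpow_iff hmeas (by simpa using hq) ENNReal.ofReal_ne_top,
    ENNReal.toReal_ofReal hq.le]
  have hdom : Continuous fun t => (K * geomPath x y t) ^ q :=
    (continuous_const.mul (continuous_geomPath hx hy)).rpow_const fun _ => Or.inr hq.le
  refine Integrable.mono' ((hdom.integrableOn_Icc).mono_set Ioc_subset_Icc_self)
    (hmeas.norm.aemeasurable.pow_const q).aestronglyMeasurable ?_
  filter_upwards [ae_restrict_mem measurableSet_Ioc] with t ht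
  rw [norm_eq_abs, abs_of_nonneg (by positivity), norm_eq_abs]
  exact rpow_le_rpow (abs_nonneg _) (hle t (Ioc_subset_Icc_self ht)) hq.le

theorem integral_abs_rpow_le_of_le_geomPath (hq : 0 < q) {x y K : ℝ} (hx : 0 < x) (hy : 0 < y)
    (hK : 0 ≤ K) (hmeas : AEStronglyMeasurable g (volume.restrict (Ioc (0:ℝ) 1)))
    (hle : ∀ t ∈ Icc (0:ℝ) 1, |g t| ≤ K * geomPath x y t) :
    (∫ t in (0:ℝ)..1, |g t| ^ q) ^ (1/q) ≤ K * y * g₂ ((x / y) ^ q) ^ (1/q) := by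
  have hint : IntervalIntegrable (fun t => |g t| ^ q) volume 0 1 := by
    rw [intervalIntegrable_iff_integrableOn_Ioc_of_le zero_le_one]
    have h := (memLp_of_abs_le_geomPath hq hx hy hmeas hle).integrable_norm_rpow'
    simp only [norm_eq_abs, ENNReal.toReal_ofReal hq.le] at h
    exact h
  have hdom : Continuous fun t => K ^ q * geomPath (x ^ q) (y ^ q) t :=
    continuous_const.mul (continuous_geomPath (by positivity) (by positivity))
  have hmono :
      ∫ t in (0:ℝ)..1, |g t| ^ q ≤
        ∫ t in (0:ℝ)..1, K ^ q * geomPath (x ^ q) (y ^ q) t := by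
    refine intervalIntegral.integral_mono_on zero_le_one hint (hdom.intervalIntegrable 0 1)
      fun t ht => ?_
    rw [← geomPath_rpow hx.le hy.le, ← mul_rpow hK (geomPath_pos hx hy).le]
    exact rpow_le_rpow (abs_nonneg _) (hle t ht) hq.le
  rw [intervalIntegral.integral_const_mul, integral_geomPath (by positivity) (by positivity),
    ← div_rpow hx.le hy.le, ← mul_assoc, ← mul_rpow hK hy.le] at hmono
  calc (∫ t in (0:ℝ)..1, |g t| ^ q) ^ (1/q)
      ≤ ((K * y) ^ q * g₂ ((x / y) ^ q)) ^ (1/q) :=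
        rpow_le_rpow (intervalIntegral.integral_nonneg zero_le_one fun t _ => by positivity)
          hmono (by positivity)
    _ = K * y * g₂ ((x / y) ^ q) ^ (1/q) := by
        rw [mul_rpow (by positivity) (g₂_nonneg (by positivity)), ← rpow_mul (by positivity),
          mul_one_div_cancel hq.ne', rpow_one]

theorem abs_integral_half_sub_mul_le_of_le_geomPath (hq : 1 < q) {x y K : ℝ} (hx : 0 < x)
    (hy : 0 < y) (hK : 0 ≤ K) (hmeas : AEStronglyMeasurable g (volume.restrict (Ioc (0:ℝ) 1)))
    (hle : ∀ t ∈ Icc (0:ℝ) 1, |g t| ≤ K * geomPath x y t) :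
    |∫ t in (0:ℝ)..1, (1/2 - t) * g t| ≤
      1/2 * ((q - 1) / (2 * q - 1)) ^ (1 - 1/q) * (K * y * g₂ ((x / y) ^ q) ^ (1/q)) := by
  have hq0 : 0 < q := by linarith
  have hC : 0 ≤ ((q - 1) / (2 * q - 1)) ^ (1 - 1/q) :=
    rpow_nonneg (div_nonneg (by linarith) (by linarith)) _
  exact (abs_integral_half_sub_mul_le hq (memLp_of_abs_le_geomPath hq0 hx hy hmeas hle)).trans
    (mul_le_mul_of_nonneg_left (integral_abs_rpow_le_of_le_geomPath hq0 hx hy hK hmeas hle)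
      (by positivity))

end HolderBounds

theorem stmt_11_general
    (I : Set ℝ) (hI : I.OrdConnected) (hIpos : I ⊆ Set.Ioi (0:ℝ))
    (f f' : ℝ → ℝ)
    (a b : ℝ) (ha : a ∈ interior I) (hb : b ∈ interior I) (hab : a < b)
    (hdiff : ∀ x ∈ interior I, HasDerivAt f (f' x) x)
    (hint : IntervalIntegrable f' volume a b)
    (q s : ℝ) (hq : 1 < q) (hs : s ∈ Set.Ioc (0:ℝ) 1)
    (hconv : SGeometricallyConvexOn s (Set.Icc a b) (fun x => |f' x| ^ q))
    (hfa : 1 ≤ |f' a|) (hfb : 1 ≤ |f' b|) :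
    |(f a + f b) / 2 - (1 / (Real.log b - Real.log a)) * ∫ x in a..b, f x / x| ≤
      (1 / 2 : ℝ) * Real.log (b / a) * ((q - 1) / (2 * q - 1)) ^ (1 - 1 / q) *
        (a * |f' a| * |f' b| ^ (1 - s) * (g₂ ((b * |f' b| ^ s / (a * |f' a| ^ s)) ^ (q))) ^ (1 / q)
         + b * |f' b| * |f' a| ^ (1 - s) * (g₂ ((a * |f' a| ^ s / (b * |f' b| ^ s)) ^ (q))) ^ (1 / q)) := by
  obtain ⟨hs0, hs1⟩ := hs
  have ha0 : 0 < a := hIpos (interior_subset ha)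
  have hb0 : 0 < b := ha0.trans hab
  have hL : 0 < log b - log a := sub_pos.2 (log_lt_log ha0 hab)
  have hf : ∀ x ∈ Icc a b, HasDerivAt f (f' x) x := fun x hx => hdiff x (hI.interior.out ha hb hx)
  set A := |f' a|
  set B := |f' b|
  have hA : 0 < A := one_pos.trans_le hfa
  have hB : 0 < B := one_pos.trans_le hfb
  have hle := fun t (ht : t ∈ Icc (0:ℝ) 1) =>
    abs_geomPath_mul_deriv_le hconv (by linarith) hs0.le hs1 ha0 hab.le hfa hfb ht
  have hmeas := (intervalIntegrable_geomPath_mul_comp ha0 hab hint).1.aestronglyMeasurable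
  have hg₂ : 0 ≤ g₂ ((b * B ^ s / (a * A ^ s)) ^ q) ^ (1 / q) :=
    rpow_nonneg (g₂_nonneg (by positivity)) _
  have hC : 0 ≤ ((q - 1) / (2 * q - 1)) ^ (1 - 1/q) :=
    rpow_nonneg (div_nonneg (by linarith) (by linarith)) _
  rw [trapezoid_sub_integral_div_self_eq ha0 hab hf hint, abs_mul, abs_of_pos hL,
    log_div hb0.ne' ha0.ne']
  calc (log b - log a) * |∫ t in (0:ℝ)..1, (1/2 - t) * (geomPath a b t * f' (geomPath a b t))|
      ≤ (log b - log a) * (1/2 * ((q - 1) / (2 * q - 1)) ^ (1 - 1/q) *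
          ((A * B) ^ (1 - s) * (b * B ^ s) * g₂ ((a * A ^ s / (b * B ^ s)) ^ q) ^ (1/q))) :=
        mul_le_mul_of_nonneg_left (abs_integral_half_sub_mul_le_of_le_geomPath hq (by positivity)
          (by positivity) (by positivity) hmeas hle) hL.le
    _ = 1/2 * (log b - log a) * ((q - 1) / (2 * q - 1)) ^ (1 - 1/q) *
          (b * B * A ^ (1 - s) * g₂ ((a * A ^ s / (b * B ^ s)) ^ q) ^ (1/q)) := by
        rw [mul_rpow hA.le hB.le]
        have hBs : B ^ (1 - s) * B ^ s = B := by rw [← rpow_add hB, sub_add_cancel, rpow_one]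
        linear_combination (1/2 * (log b - log a) * ((q - 1) / (2 * q - 1)) ^ (1 - 1/q) *
          A ^ (1 - s) * b * g₂ ((a * A ^ s / (b * B ^ s)) ^ q) ^ (1/q)) * hBs
    _ ≤ _ :=
        mul_le_mul_of_nonneg_left (le_add_of_nonneg_left (mul_nonneg (by positivity) hg₂))
          (mul_nonneg (mul_nonneg (by norm_num) hL.le) hC)

theorem stmt_11
    (I : Set ℝ) (hI : I.OrdConnected) (hIpos : I ⊆ Set.Ioi (0:ℝ))
    (f f' : ℝ → ℝ) (hfpos : ∀ x ∈ I, 0 < f x)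
    (a b : ℝ) (ha : a ∈ interior I) (hb : b ∈ interior I) (hab : a < b)
    (hdiff : ∀ x ∈ interior I, HasDerivAt f (f' x) x)
    (hint : IntervalIntegrable f' volume a b)
    (q s : ℝ) (hq : 1 < q) (hs : s ∈ Set.Ioc (0:ℝ) 1)
    (hconv : SGeometricallyConvexOn s (Set.Icc a b) (fun x => |f' x| ^ q))
    (hfa : 1 ≤ |f' a|) (hfb : 1 ≤ |f' b|) :
    |(f a + f b) / 2 - (1 / (Real.log b - Real.log a)) * ∫ x in a..b, f x / x| ≤
      (1 / 2 : ℝ) * Real.log (b / a) * ((q - 1) / (2 * q - 1)) ^ (1 - 1 / q) *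
        (a * |f' a| * |f' b| ^ (1 - s) * (g₂ ((b * |f' b| ^ s / (a * |f' a| ^ s)) ^ (q))) ^ (1 / q)
         + b * |f' b| * |f' a| ^ (1 - s) * (g₂ ((a * |f' a| ^ s / (b * |f' b| ^ s)) ^ (q))) ^ (1 / q)) :=
  stmt_11_general I hI hIpos f f' a b ha hb hab hdiff hint q s hq hs hconv hfa hfb
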